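/- Let G=(V,E) be a complete p-partite multigraph with p≥2, and suppose that p≥3 or V₁≠∅. Then every V₂-favorable admissible matching policy Φ is maximal: stab(G,Φ) = Ncond(G). -/

import Mathlib

open scoped BigOperators

attribute [local instance] Classical.propDecidable

/-- A multigraph on the vertex set `V`: a symmetric binary relation on `V`,
possibly with self-loops. -/
structure Multigraph (V : Type*) where
  Adj : V → V → Prop
  symm : ∀ u v, Adj u v → Adj v u

namespace Multigraph

variable {V : Type*}

/-- The neighborhood `E(U)` of a set `U` of vertices. -/
def nbhd (G : Multigraph V) (U : Set V) : Set V :=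
  {v | ∃ u ∈ U, G.Adj u v}

/-- `V₁`, the set of self-looped vertices. -/
def loopSet (G : Multigraph V) : Set V := {v | G.Adj v v}

/-- `V₂`, the set of non-self-looped vertices. -/
def nonloopSet (G : Multigraph V) : Set V := {v | ¬ G.Adj v v}

/-- The maximal subgraph `Ǧ`, obtained by deleting all self-loops. -/
def check (G : Multigraph V) : Multigraph V where
  Adj u v := G.Adj u v ∧ u ≠ v
  symm u v h := ⟨G.symm u v h.1, h.2.symm⟩

/-- An independent set: a nonempty set of pairwise non-adjacent vertices. -/
def IsIndep (G : Multigraph V) (I : Set V) : Prop :=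
  I.Nonempty ∧ ∀ i ∈ I, ∀ j ∈ I, ¬ G.Adj i j

/-- Connectivity of a multigraph: any two nodes are joined by a path of edges. -/
def Connected (G : Multigraph V) : Prop :=
  ∀ u v : V, Relation.ReflTransGen G.Adj u v

/-- `G` is a bipartite graph: its vertex set splits into two parts such that every
edge joins the two parts (in particular, `G` has no self-loop). -/
def IsBipartiteGraph (G : Multigraph V) : Prop :=
  ∃ A B : Set V, (∀ v, v ∈ A ∨ v ∈ B) ∧ (∀ v, ¬(v ∈ A ∧ v ∈ B)) ∧
    ∀ u v, G.Adj u v → (u ∈ A ∧ v ∈ B) ∨ (u ∈ B ∧ v ∈ A)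

section Meas

variable [Fintype V]

/-- Total mass `μ(S)` of a set of vertices. -/
noncomputable def mass (μ : V → ℝ) (S : Set V) : ℝ := ∑ v, S.indicator μ v

/-- `μ ∈ ℳ(V)`: a probability measure with full support on `V`. -/
def FullSupport (μ : V → ℝ) : Prop := (∀ v, 0 < μ v) ∧ ∑ v, μ v = 1

/-- The stability condition `Ncond(G)`: fully supported probability measures `μ` such
that `μ(I) < μ(E(I))` for every independent set `I` of `G`. -/
def Ncond (G : Multigraph V) (μ : V → ℝ) : Prop :=
  FullSupport μ ∧ ∀ I : Set V, G.IsIndep I → mass μ I < mass μ (G.nbhd I)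

/-- The degree of a vertex: its number of neighbors (including itself if self-looped). -/
noncomputable def deg (G : Multigraph V) (i : V) : ℕ := (G.nbhd {i}).ncard

end Meas
section Chain

variable [DecidableEq V]

/-- The state space `𝕎` of admissible queue details. -/
def WSpace (G : Multigraph V) : Set (List V) :=
  {w | (∀ i j : V, i ≠ j → G.Adj i j → w.count i = 0 ∨ w.count j = 0) ∧
    ∀ i : V, G.Adj i i → w.count i ≤ 1}

/-- An admissible matching policy: a (possibly random) transition rule which, in state
`w` upon the arrival of an item of class `v`, appends `v` when no compatible item is in
line, and otherwise deletes one stored item of a class compatible with `v`. -/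
structure Policy (G : Multigraph V) where
  next : List V → V → List V → ℝ
  nonneg : ∀ w v w', 0 ≤ next w v w'
  total : ∀ w ∈ WSpace G, ∀ v : V, (∑' w' : List V, next w v w') = 1
  noMatch : ∀ w ∈ WSpace G, ∀ v : V, (∀ a ∈ w, ¬ G.Adj a v) → next w v (w ++ [v]) = 1
  matchRule : ∀ w ∈ WSpace G, ∀ v : V, (∃ a ∈ w, G.Adj a v) → ∀ w' : List V,
    next w v w' ≠ 0 → ∃ k : Fin w.length, G.Adj (w.get k) v ∧ w' = w.eraseIdx k

/-- The transition kernel of the buffer-content Markov chain of the model `(G,Φ,μ)`. -/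
noncomputable def kernel [Fintype V] (G : Multigraph V) (pol : Policy G) (μ : V → ℝ)
    (w w' : List V) : ℝ :=
  ∑ v : V, μ v * pol.next w v w'

/-- Irreducibility (on the state space `𝕎`) of a transition kernel. -/
def Irreducible (G : Multigraph V) (P : List V → List V → ℝ) : Prop :=
  ∀ w ∈ WSpace G, ∀ w' ∈ WSpace G, Relation.ReflTransGen (fun a b => 0 < P a b) w w'

/-- A stationary probability distribution, supported on `𝕎`, for a transition kernel. -/
def IsStationary (G : Multigraph V) (P : List V → List V → ℝ) (π : List V → ℝ) :
    Prop :=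
  (∀ w, 0 ≤ π w) ∧ (∀ w ∉ WSpace G, π w = 0) ∧ (∑' w : List V, π w) = 1 ∧
    ∀ w' : List V, (∑' w : List V, π w * P w w') = π w'

/-- Positive recurrence of the chain: irreducibility together with the existence of a
stationary probability distribution. -/
def PositiveRecurrent (G : Multigraph V) (P : List V → List V → ℝ) : Prop :=
  Irreducible G P ∧ ∃ π : List V → ℝ, IsStationary G P π

end Chain
section V2Fav

variable [DecidableEq V]

/-- A `V₂`-favorable policy: the incoming item always prioritizes a match with a
compatible non-self-looped class over a self-looped one, whenever it has the choice. -/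
def V2Favorable (G : Multigraph V) (pol : Policy G) : Prop :=
  ∀ w ∈ WSpace G, ∀ v : V, (∃ a ∈ w, G.Adj a v ∧ ¬ G.Adj a a) →
    ∀ w' : List V, pol.next w v w' ≠ 0 →
      ∃ k : Fin w.length, G.Adj (w.get k) v ∧ ¬ G.Adj (w.get k) (w.get k) ∧
        w' = w.eraseIdx k

end V2Fav
/-- `G` is a complete `p`-partite multigraph: its maximal subgraph `Ǧ` is complete
`p`-partite, i.e. the vertex set partitions into `p` (maximal independent) parts, two
nodes being `Ǧ`-adjacent iff they lie in distinct parts. -/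
def CompletePPartite (G : Multigraph V) (p : ℕ) : Prop :=
  ∃ f : V → Fin p, Function.Surjective f ∧ ∀ u v : V, (check G).Adj u v ↔ f u ≠ f v
end Multigraph

open Multigraph

/-!
Fix a part map `f : V → Fin p` of `G`: distinct vertices are adjacent iff they lie in
different parts. Every queue state then lies in a single part, and `Ncond G μ` says
`μ(V₂ ∩ part k) < μ(V ∖ part k)` for each part `k`. Under a `V₂`-favorable policy the number of
non-looped items in a queue of part `k` goes up by one upon an arrival from `V₂ ∩ part k`, down by one
(if positive) upon an arrival from another part, and is unchanged otherwise.

Necessity: in a stationary regime the flux across the cut between two consecutive levels of the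
part `k` balances, `μ(V₂ ∩ part k) π(level m) = μ(V ∖ part k) π(level (m + 1))`; irreducibility
puts positive mass on the empty queue, which lies at level `0` of every part, and the total mass
of `π` is finite. Sufficiency: a state empties through arrivals from other parts, and is built
from the empty queue by arrivals, so the chain is irreducible; the number of non-looped items
is a Foster–Lyapunov function, with drift `-min_k (μ(V ∖ part k) - μ(V₂ ∩ part k))` off the
finite set of queues of looped items, and a Krylov–Bogolyubov limit of the Cesàro averages of
the laws of the chain is a stationary distribution.
-/

open Finset Filter Topology

theorem exists_ultrafilter_tendsto_of_mem_Icc {α : Type*} (u : ℕ → α → ℝ)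
    (hu : ∀ N a, u N a ∈ Set.Icc 0 1) : ∃ (U : Ultrafilter ℕ) (ν : α → ℝ),
      (U : Filter ℕ) ≤ atTop ∧ ∀ a, Tendsto (u · a) U (𝓝 (ν a)) := by
  obtain ⟨ν, -, hν⟩ := (isCompact_univ_pi fun _ => isCompact_Icc).ultrafilter_le_nhds
    ((Ultrafilter.of atTop).map u)
    (le_principal_iff.2 (Ultrafilter.mem_map.2 (univ_mem' fun N a _ => hu N a)))
  exact ⟨_, ν, Ultrafilter.of_le _, tendsto_pi_nhds.1 hν⟩

section Markov

variable {α : Type*} {S : Set α} {P : α → α → ℝ}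

structure IsMarkovOn (S : Set α) (P : α → α → ℝ) : Prop where
  nonneg : ∀ a b, 0 ≤ P a b
  hasSum : ∀ a ∈ S, HasSum (P a) 1
  mapsTo : ∀ a ∈ S, ∀ b, P a b ≠ 0 → b ∈ S

structure IsMassOn (S : Set α) (ν : α → ℝ) : Prop where
  nonneg : ∀ a, 0 ≤ ν a
  eq_zero : ∀ a ∉ S, ν a = 0
  summable : Summable ν

/-- `IsStationary G` is `IsStationaryOn (WSpace G)`. -/
def IsStationaryOn (S : Set α) (P : α → α → ℝ) (π : α → ℝ) : Prop :=
  (∀ a, 0 ≤ π a) ∧ (∀ a ∉ S, π a = 0) ∧ ∑' a, π a = 1 ∧ ∀ b, ∑' a, π a * P a b = π b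

theorem IsStationaryOn.isMassOn {π : α → ℝ} (hπ : IsStationaryOn S P π) : IsMassOn S π :=
  ⟨hπ.1, hπ.2.1, by_contra fun h => by simpa [tsum_eq_zero_of_not_summable h] using hπ.2.2.1⟩

namespace IsMarkovOn

variable (hP : IsMarkovOn S P)
include hP

theorem le_one {a : α} (ha : a ∈ S) (b : α) : P a b ≤ 1 :=
  le_hasSum (hP.hasSum a ha) b fun c _ => hP.nonneg a c

theorem summable_mul_of_le_one {a : α} (ha : a ∈ S) {g : α → ℝ} (hg0 : ∀ b, 0 ≤ g b)
    (hg1 : ∀ b, g b ≤ 1) : Summable fun b => P a b * g b :=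
  .of_nonneg_of_le (fun b => mul_nonneg (hP.nonneg a b) (hg0 b))
    (fun b => mul_le_of_le_one_right (hP.nonneg a b) (hg1 b)) (hP.hasSum a ha).summable

theorem tsum_mul_le_one {a : α} (ha : a ∈ S) {g : α → ℝ} (hg0 : ∀ b, 0 ≤ g b)
    (hg1 : ∀ b, g b ≤ 1) : ∑' b, P a b * g b ≤ 1 :=
  (hP.hasSum a ha).tsum_eq ▸ (hP.summable_mul_of_le_one ha hg0 hg1).tsum_le_tsum
    (fun b => mul_le_of_le_one_right (hP.nonneg a b) (hg1 b)) (hP.hasSum a ha).summable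

theorem mul_le {ν : α → ℝ} (hν : IsMassOn S ν) (a b : α) : ν a * P a b ≤ ν a := by
  by_cases ha : a ∈ S
  · exact mul_le_of_le_one_right (hν.nonneg a) (hP.le_one ha b)
  · simp [hν.eq_zero a ha]

theorem summable_mul {ν : α → ℝ} (hν : IsMassOn S ν) (b : α) :
    Summable fun a => ν a * P a b :=
  .of_nonneg_of_le (fun a => mul_nonneg (hν.nonneg a) (hP.nonneg a b)) (hP.mul_le hν · b)
    hν.summable

/-- The bound `0 ≤ g ≤ 1` is what makes the double series summable. -/
theorem summable_and_tsum_mul_tsum {ν : α → ℝ} (hν : IsMassOn S ν) {g : α → ℝ}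
    (hg0 : ∀ b, 0 ≤ g b) (hg1 : ∀ b, g b ≤ 1) :
    Summable (fun b => (∑' a, ν a * P a b) * g b) ∧
      ∑' a, ν a * ∑' b, P a b * g b = ∑' b, (∑' a, ν a * P a b) * g b := by
  set F : α → α → ℝ := fun a b => ν a * (P a b * g b)
  have hF0 : ∀ a b, 0 ≤ F a b := fun a b =>
    mul_nonneg (hν.nonneg a) (mul_nonneg (hP.nonneg a b) (hg0 b))
  have hrow : ∀ a, Summable (F a) := fun a => by
    by_cases ha : a ∈ S
    · exact (hP.summable_mul_of_le_one ha hg0 hg1).mul_left (ν a)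
    · simp [F, hν.eq_zero a ha]
  have hrow_le : ∀ a, ∑' b, F a b ≤ ν a := fun a => by
    by_cases ha : a ∈ S
    · rw [tsum_mul_left]
      exact mul_le_of_le_one_right (hν.nonneg a) (hP.tsum_mul_le_one ha hg0 hg1)
    · simp [F, hν.eq_zero a ha]
  have hF : Summable (Function.uncurry F) :=
    (summable_prod_of_nonneg fun x => hF0 x.1 x.2).2 ⟨hrow, .of_nonneg_of_le
      (fun a => tsum_nonneg (hF0 a)) hrow_le hν.summable⟩
  have hcol : ∀ b, Summable fun a => F a b := fun b =>
    .of_nonneg_of_le (hF0 · b) (fun a => (mul_le_mul_of_nonneg_left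
      (mul_le_of_le_one_right (hP.nonneg a b) (hg1 b)) (hν.nonneg a)).trans (hP.mul_le hν a b))
      hν.summable
  have hswap : ∀ b, ∑' a, F a b = (∑' a, ν a * P a b) * g b := fun b => by
    rw [← tsum_mul_right]; simp only [F, mul_assoc]
  refine ⟨?_, ?_⟩
  · simp_rw [← hswap]
    exact ((summable_prod_of_nonneg fun x => hF0 x.2 x.1).1 hF.prod_symm).2
  · simp_rw [← hswap, ← tsum_mul_left]
    exact (hF.tsum_comm' hrow hcol).symm

theorem summable_and_tsum_tsum {ν : α → ℝ} (hν : IsMassOn S ν) :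
    Summable (fun b => ∑' a, ν a * P a b) ∧ ∑' b, ∑' a, ν a * P a b = ∑' a, ν a := by
  obtain ⟨hs, heq⟩ := hP.summable_and_tsum_mul_tsum hν (g := 1) (fun _ => zero_le_one)
    (fun _ => le_rfl)
  refine ⟨by simpa using hs, ?_⟩
  simp only [Pi.one_apply, mul_one] at heq
  rw [← heq]
  refine tsum_congr fun a => ?_
  by_cases ha : a ∈ S
  · rw [(hP.hasSum a ha).tsum_eq, mul_one]
  · simp [hν.eq_zero a ha]

theorem tsum_mul_tsum_eq_of_isStationaryOn {π : α → ℝ} (hπ : IsStationaryOn S P π) {g : α → ℝ}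
    (hg0 : ∀ b, 0 ≤ g b) (hg1 : ∀ b, g b ≤ 1) :
    ∑' a, π a * ∑' b, P a b * g b = ∑' b, π b * g b := by
  rw [(hP.summable_and_tsum_mul_tsum hπ.isMassOn hg0 hg1).2]
  simp_rw [hπ.2.2.2]

theorem pos_of_isStationaryOn {π : α → ℝ} (hπ : IsStationaryOn S P π)
    (hirr : ∀ a ∈ S, ∀ b ∈ S, Relation.ReflTransGen (fun a b => 0 < P a b) a b) {b : α}
    (hb : b ∈ S) : 0 < π b := by
  obtain ⟨a, ha⟩ : ∃ a, 0 < π a := by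
    by_contra! h
    simpa [fun a => le_antisymm (h a) (hπ.1 a)] using hπ.2.2.1
  have hab := hirr a (by_contra fun h => ha.ne' (hπ.2.1 a h)) b hb
  clear hb
  induction hab with
  | refl => exact ha
  | @tail b c _ hbc ih =>
    calc 0 < π b * P b c := mul_pos ih hbc
      _ ≤ ∑' a, π a * P a c := (hP.summable_mul hπ.isMassOn c).le_tsum b
          fun a _ => mul_nonneg (hπ.1 a) (hP.nonneg a c)
      _ = π c := hπ.2.2.2 c

/-- A subinvariant measure has the same total mass as its image, so it is invariant. -/
theorem exists_isStationaryOn_of_tsum_mul_le {ν : α → ℝ} (hν : IsMassOn S ν)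
    (hpos : 0 < ∑' a, ν a) (hsub : ∀ b, ∑' a, ν a * P a b ≤ ν b) :
    ∃ π, IsStationaryOn S P π := by
  obtain ⟨hsumm, htot⟩ := hP.summable_and_tsum_tsum hν
  have hinv : ∀ b, ∑' a, ν a * P a b = ν b := fun b => by
    by_contra hb
    exact (Summable.tsum_lt_tsum hsub ((hsub b).lt_of_ne hb) hsumm hν.summable).ne htot
  refine ⟨fun a => ν a / ∑' a, ν a, fun a => div_nonneg (hν.nonneg a) hpos.le,
    fun a ha => by simp [hν.eq_zero a ha], by simp_rw [tsum_div_const, div_self hpos.ne'],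
    fun b => ?_⟩
  simp_rw [div_mul_eq_mul_div, tsum_div_const, hinv]

end IsMarkovOn

noncomputable def stepDist (P : α → α → ℝ) (a₀ : α) : ℕ → α → ℝ
  | 0 => fun a => if a = a₀ then 1 else 0
  | n + 1 => fun b => ∑' a, stepDist P a₀ n a * P a b

noncomputable def cesaro (P : α → α → ℝ) (a₀ : α) (N : ℕ) (a : α) : ℝ :=
  (∑ n ∈ range N, stepDist P a₀ n a) / N

namespace IsMarkovOn

variable (hP : IsMarkovOn S P) {a₀ : α}
include hP

theorem isMassOn_stepDist (ha₀ : a₀ ∈ S) (n : ℕ) :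
    IsMassOn S (stepDist P a₀ n) ∧ ∑' a, stepDist P a₀ n a = 1 := by
  induction n with
  | zero =>
    refine ⟨⟨fun a => ?_, fun a ha => ?_, ?_⟩, ?_⟩
    · simp only [stepDist]; split_ifs <;> norm_num
    · simp only [stepDist]; rw [if_neg (ne_of_mem_of_not_mem ha₀ ha).symm]
    · exact summable_of_ne_finset_zero (s := {a₀}) fun a ha => by simp_all [stepDist]
    · simp [stepDist]
  | succ n ih =>
    obtain ⟨hs, htot⟩ := hP.summable_and_tsum_tsum ih.1
    refine ⟨⟨fun b => tsum_nonneg fun a => mul_nonneg (ih.1.nonneg a) (hP.nonneg a b),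
      fun b hb => ?_, hs⟩, htot.trans ih.2⟩
    refine (tsum_congr fun a => ?_).trans tsum_zero
    by_cases ha : a ∈ S
    · rw [not_imp_comm.1 (hP.mapsTo a ha b) hb, mul_zero]
    · rw [ih.1.eq_zero a ha, zero_mul]

theorem support_stepDist_finite (hfin : ∀ a ∈ S, (Function.support (P a)).Finite)
    (ha₀ : a₀ ∈ S) (n : ℕ) : (Function.support (stepDist P a₀ n)).Finite := by
  induction n with
  | zero => exact (Set.finite_singleton a₀).subset fun a ha => by_contra fun h => ha (by
      simp_all [stepDist])
  | succ n ih =>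
    refine (ih.biUnion fun a ha => hfin a ?_).subset fun b hb => ?_
    · exact by_contra fun h => ha ((hP.isMassOn_stepDist ha₀ n).1.eq_zero a h)
    · obtain ⟨a, ha⟩ : ∃ a, stepDist P a₀ n a * P a b ≠ 0 :=
        not_forall.1 fun h => hb (by simp [stepDist, h])
      exact Set.mem_biUnion (left_ne_zero_of_mul ha) (right_ne_zero_of_mul ha)

/-- Finite supports make this valid for unbounded `g`, unlike `summable_and_tsum_mul_tsum`. -/
theorem tsum_stepDist_succ_mul (hfin : ∀ a ∈ S, (Function.support (P a)).Finite)
    (ha₀ : a₀ ∈ S) (n : ℕ) (g : α → ℝ) :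
    ∑' b, stepDist P a₀ (n + 1) b * g b = ∑' a, stepDist P a₀ n a * ∑' b, P a b * g b := by
  set T := (hP.support_stepDist_finite hfin ha₀ n).toFinset
  have hT : ∀ a ∉ T, stepDist P a₀ n a = 0 := by simp [T]
  have hTS : ∀ a ∈ T, a ∈ S := fun a ha => by_contra fun h => by
    simp [T, (hP.isMassOn_stepDist ha₀ n).1.eq_zero a h] at ha
  have hrow : ∀ a ∈ T, Summable fun b => stepDist P a₀ n a * P a b * g b := fun a ha =>
    summable_of_ne_finset_zero (s := (hfin a (hTS a ha)).toFinset) fun b hb => by simp_all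
  calc ∑' b, stepDist P a₀ (n + 1) b * g b
      = ∑' b, ∑ a ∈ T, stepDist P a₀ n a * P a b * g b := by
        refine tsum_congr fun b => ?_
        simp only [stepDist]
        rw [tsum_eq_sum fun a ha => by rw [hT a ha, zero_mul], Finset.sum_mul]
    _ = ∑ a ∈ T, stepDist P a₀ n a * ∑' b, P a b * g b := by
        rw [Summable.tsum_finsetSum hrow]
        simp_rw [mul_assoc, tsum_mul_left]
    _ = _ := (tsum_eq_sum fun a ha => by rw [hT a ha, zero_mul]).symm

theorem le_sum_stepDist_of_drift (hfin : ∀ a ∈ S, (Function.support (P a)).Finite)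
    (ha₀ : a₀ ∈ S) {L : α → ℝ} (hL0 : ∀ a, 0 ≤ L a) {F : Finset α} {ε b : ℝ}
    (hdrift : ∀ a ∈ S, ∑' c, P a c * L c + ε ≤ L a + if a ∈ F then b else 0) (N : ℕ) :
    ε * N ≤ L a₀ + b * ∑ n ∈ range N, ∑ a ∈ F, stepDist P a₀ n a := by
  set ρ := stepDist P a₀
  set x : ℕ → ℝ := fun n => ∑' a, ρ n a * L a
  have hsumm : ∀ n (g : α → ℝ), Summable fun a => ρ n a * g a := fun n g =>
    summable_of_ne_finset_zero (s := (hP.support_stepDist_finite hfin ha₀ n).toFinset)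
      fun a ha => by simp_all [ρ]
  have hstep : ∀ n, x (n + 1) + ε ≤ x n + b * ∑ a ∈ F, ρ n a := by
    intro n
    have hρ : IsMassOn S (ρ n) ∧ ∑' a, ρ n a = 1 := hP.isMassOn_stepDist ha₀ n
    have hpt : ∀ a, ρ n a * (∑' c, P a c * L c + ε) ≤ ρ n a * (L a + if a ∈ F then b else 0) :=
      fun a => by
        by_cases ha : a ∈ S
        · exact mul_le_mul_of_nonneg_left (hdrift a ha) (hρ.1.nonneg a)
        · simp [hρ.1.eq_zero a ha]
    have hF : ∑' a, ρ n a * (if a ∈ F then b else 0) = b * ∑ a ∈ F, ρ n a := by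
      rw [tsum_eq_sum (s := F) fun a ha => by simp [ha], mul_sum]
      exact sum_congr rfl fun a ha => by simp [ha, mul_comm]
    calc x (n + 1) + ε = ∑' a, ρ n a * (∑' c, P a c * L c + ε) := by
          simp_rw [mul_add]
          rw [Summable.tsum_add (hsumm n _) (hsumm n _), tsum_mul_right, hρ.2, one_mul,
            ← hP.tsum_stepDist_succ_mul hfin ha₀]
      _ ≤ ∑' a, ρ n a * (L a + if a ∈ F then b else 0) :=
          (hsumm n _).tsum_le_tsum hpt (hsumm n _)
      _ = x n + b * ∑ a ∈ F, ρ n a := by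
          simp_rw [mul_add]
          rw [Summable.tsum_add (hsumm n _) (hsumm n _), hF]
  have hx0 : x 0 = L a₀ := by simp [x, ρ, stepDist]
  have htel : ∀ N : ℕ, x N + ε * N ≤ L a₀ + b * ∑ n ∈ range N, ∑ a ∈ F, ρ n a := by
    intro N
    induction N with
    | zero => simp [hx0]
    | succ N ih =>
      rw [sum_range_succ, mul_add, Nat.cast_succ]
      linarith [hstep N]
  have hxN : 0 ≤ x N := tsum_nonneg fun a =>
    mul_nonneg ((hP.isMassOn_stepDist ha₀ N).1.nonneg a) (hL0 a)
  linarith [htel N]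

theorem sum_cesaro_le_one (ha₀ : a₀ ∈ S) (N : ℕ) (A : Finset α) :
    ∑ a ∈ A, cesaro P a₀ N a ≤ 1 := by
  have hρ := hP.isMassOn_stepDist ha₀
  simp only [cesaro]
  rw [← sum_div, sum_comm]
  refine div_le_one_of_le₀ ?_ N.cast_nonneg
  calc ∑ n ∈ range N, ∑ a ∈ A, stepDist P a₀ n a ≤ ∑ n ∈ range N, (1 : ℝ) :=
        sum_le_sum fun n _ =>
          (hρ n).2 ▸ (hρ n).1.summable.sum_le_tsum A fun a _ => (hρ n).1.nonneg a
    _ = N := by simp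

theorem cesaro_mem_Icc (ha₀ : a₀ ∈ S) (N : ℕ) (a : α) : cesaro P a₀ N a ∈ Set.Icc 0 1 :=
  ⟨div_nonneg (sum_nonneg fun n _ => (hP.isMassOn_stepDist ha₀ n).1.nonneg a) N.cast_nonneg,
    by simpa using hP.sum_cesaro_le_one ha₀ N {a}⟩

theorem sum_cesaro_mul_le (ha₀ : a₀ ∈ S) (N : ℕ) (A : Finset α) (b : α) :
    ∑ a ∈ A, cesaro P a₀ N a * P a b ≤ cesaro P a₀ N b + 1 / N := by
  have hρ := hP.isMassOn_stepDist ha₀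
  have hstep : ∀ n, ∑ a ∈ A, stepDist P a₀ n a * P a b ≤ stepDist P a₀ (n + 1) b := fun n =>
    (hP.summable_mul (hρ n).1 b).sum_le_tsum A fun a _ =>
      mul_nonneg ((hρ n).1.nonneg a) (hP.nonneg a b)
  have hlast : stepDist P a₀ N b ≤ 1 :=
    (hρ N).2 ▸ (hρ N).1.summable.le_tsum b fun a _ => (hρ N).1.nonneg a
  have htel := sum_range_succ' (fun n => stepDist P a₀ n b) N
  rw [sum_range_succ] at htel
  simp only [cesaro, div_mul_eq_mul_div, ← sum_div, ← add_div]
  refine div_le_div_of_nonneg_right ?_ N.cast_nonneg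
  calc ∑ a ∈ A, (∑ n ∈ range N, stepDist P a₀ n a) * P a b
      = ∑ n ∈ range N, ∑ a ∈ A, stepDist P a₀ n a * P a b := by
        simp_rw [sum_mul]; exact sum_comm
    _ ≤ ∑ n ∈ range N, stepDist P a₀ (n + 1) b := sum_le_sum fun n _ => hstep n
    _ ≤ ∑ n ∈ range N, stepDist P a₀ n b + 1 := by linarith [(hρ 0).1.nonneg b]

/-- Krylov–Bogolyubov: if the time averages of the laws of the chain keep a fixed positive
fraction of their mass on a finite set, a limit point of these averages is a nonzero
subinvariant measure. -/
theorem exists_isStationaryOn_of_tight (ha₀ : a₀ ∈ S) {F : Finset α} {c d : ℝ} (hc : 0 < c)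
    (htight : ∀ N : ℕ, c * N ≤ d + ∑ n ∈ range N, ∑ a ∈ F, stepDist P a₀ n a) :
    ∃ π, IsStationaryOn S P π := by
  obtain ⟨U, ν, hU, hlim⟩ :=
    exists_ultrafilter_tendsto_of_mem_Icc (cesaro P a₀) (hP.cesaro_mem_Icc ha₀)
  have hlimA : ∀ (A : Finset α) (g : α → ℝ), Tendsto (fun N => ∑ a ∈ A, cesaro P a₀ N a * g a)
      U (𝓝 (∑ a ∈ A, ν a * g a)) := fun A g =>
    tendsto_finsetSum _ fun a _ => (hlim a).mul_const (g a)
  have hν0 : ∀ a, 0 ≤ ν a := fun a =>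
    ge_of_tendsto' (hlim a) fun N => (hP.cesaro_mem_Icc ha₀ N a).1
  have hνS : ∀ a ∉ S, ν a = 0 := fun a ha => tendsto_nhds_unique (hlim a) <| by
    simp [cesaro, fun n => (hP.isMassOn_stepDist ha₀ n).1.eq_zero a ha]
  have hνmass : IsMassOn S ν := ⟨hν0, hνS, summable_of_sum_le hν0 fun A =>
    le_of_tendsto' (by simpa using hlimA A 1) (hP.sum_cesaro_le_one ha₀ · A)⟩
  have hνF : c ≤ ∑ a ∈ F, ν a := by
    have hcd : Tendsto (fun N : ℕ => c - d / N) U (𝓝 c) := by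
      simpa using tendsto_const_nhds.sub
        ((tendsto_const_nhds (x := d)).div_atTop tendsto_natCast_atTop_atTop |>.mono_left hU)
    refine le_of_tendsto_of_tendsto hcd (by simpa using hlimA F 1) ?_
    filter_upwards [hU (eventually_gt_atTop 0)] with N hN
    have hN' : (0 : ℝ) < N := by exact_mod_cast hN
    simp only [cesaro, ← sum_div]
    rw [sum_comm, sub_le_iff_le_add, ← add_div, le_div_iff₀ hN']
    linarith [htight N]
  refine hP.exists_isStationaryOn_of_tsum_mul_le hνmass
    (hc.trans_le (hνF.trans (hνmass.summable.sum_le_tsum F fun a _ => hν0 a))) fun b =>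
      (hP.summable_mul hνmass b).tsum_le_of_sum_le fun A => ?_
  exact le_of_tendsto_of_tendsto' (hlimA A (P · b))
    (by simpa using (hlim b).add (tendsto_one_div_atTop_nhds_zero_nat.mono_left hU))
    (hP.sum_cesaro_mul_le ha₀ · A b)

/-- Foster's criterion. -/
theorem exists_isStationaryOn_of_drift (hfin : ∀ a ∈ S, (Function.support (P a)).Finite)
    (ha₀ : a₀ ∈ S) {L : α → ℝ} (hL0 : ∀ a, 0 ≤ L a) {F : Finset α} {ε b : ℝ} (hε : 0 < ε)
    (hb : 0 < b) (hdrift : ∀ a ∈ S, ∑' c, P a c * L c + ε ≤ L a + if a ∈ F then b else 0) :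
    ∃ π, IsStationaryOn S P π := by
  refine hP.exists_isStationaryOn_of_tight ha₀ (F := F) (c := ε / b) (d := L a₀ / b)
    (div_pos hε hb) fun N => ?_
  rw [div_mul_eq_mul_div, div_add' _ _ _ hb.ne', div_le_div_iff_of_pos_right hb]
  linarith [hP.le_sum_stepDist_of_drift hfin ha₀ hL0 hdrift N]

end IsMarkovOn

end Markov

theorem List.countP_eraseIdx_add {α : Type*} (p : α → Bool) (l : List α) {i : ℕ}
    (hi : i < l.length) : (l.eraseIdx i).countP p + (if p l[i] then 1 else 0) = l.countP p := by
  rw [← (List.getElem_cons_eraseIdx_perm hi).countP_eq p, List.countP_cons]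

namespace Multigraph

variable {V : Type*} {G : Multigraph V}

section Mass

variable [Fintype V] {μ : V → ℝ}

theorem mass_mono (hμ : ∀ v, 0 ≤ μ v) {S T : Set V} (h : S ⊆ T) : mass μ S ≤ mass μ T :=
  Finset.sum_le_sum fun v _ => Set.indicator_le_indicator_of_subset h hμ v

theorem mass_pos (hμ : ∀ v, 0 < μ v) {S : Set V} (hS : S.Nonempty) : 0 < mass μ S := by
  obtain ⟨v, hv⟩ := hS
  exact Finset.sum_pos' (fun u _ => Set.indicator_nonneg (fun u _ => (hμ u).le) u)
    ⟨v, Finset.mem_univ v, by simpa [hv] using hμ v⟩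

theorem sum_mul_ite_eq_mass {ι : Type*} (f : V → ι) (k : ι) (x y z : ℝ) :
    ∑ v, μ v * (if f v = k then (if G.Adj v v then y else x) else z) =
      mass μ {v | f v = k ∧ ¬ G.Adj v v} * x + mass μ {v | f v = k ∧ G.Adj v v} * y +
        mass μ {v | f v ≠ k} * z := by
  simp only [mass, Finset.sum_mul, ← Finset.sum_add_distrib]
  refine Finset.sum_congr rfl fun v _ => ?_
  by_cases h₁ : f v = k <;> by_cases h₂ : G.Adj v v <;> simp [Set.indicator, h₁, h₂]

theorem mass_add_mass_add_mass (hμ1 : ∑ v, μ v = 1) {ι : Type*} (f : V → ι) (k : ι) :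
    mass μ {v | f v = k ∧ ¬ G.Adj v v} + mass μ {v | f v = k ∧ G.Adj v v} +
      mass μ {v | f v ≠ k} = 1 := by
  simpa [hμ1] using (sum_mul_ite_eq_mass (G := G) (μ := μ) f k 1 1 1).symm

end Mass

noncomputable def nonloopCount (G : Multigraph V) (w : List V) : ℕ :=
  w.countP fun a => ¬ G.Adj a a

def partLevel {ι : Type*} (G : Multigraph V) (f : V → ι) (k : ι) (m : ℕ) : Set (List V) :=
  {w | (∀ a ∈ w, f a = k) ∧ G.nonloopCount w = m}

def partAbove {ι : Type*} (G : Multigraph V) (f : V → ι) (k : ι) (m : ℕ) : Set (List V) :=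
  {w | (∀ a ∈ w, f a = k) ∧ m ≤ G.nonloopCount w}

theorem nonloopCount_append_singleton (w : List V) (v : V) :
    G.nonloopCount (w ++ [v]) = G.nonloopCount w + if G.Adj v v then 0 else 1 := by
  by_cases h : G.Adj v v <;> simp [nonloopCount, h]

theorem nonloopCount_eraseIdx_add (w : List V) (k : Fin w.length) :
    G.nonloopCount (w.eraseIdx k) + (if G.Adj w[k] w[k] then 0 else 1) = G.nonloopCount w := by
  have := List.countP_eraseIdx_add (fun a => decide ¬ G.Adj a a) w k.2
  by_cases h : G.Adj w[k] w[k] <;> simp_all [nonloopCount]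

section States

variable [DecidableEq V]

instance : Std.Symm fun a b : V => ¬ G.Adj a b := ⟨fun a b h h' => h (G.symm b a h')⟩

theorem mem_wSpace_iff_pairwise {w : List V} :
    w ∈ WSpace G ↔ w.Pairwise fun a b => ¬ G.Adj a b := by
  constructor
  · refine fun hw => List.pairwise_iff_forall_sublist.2 fun {a b} hab hadj => ?_
    by_cases h : a = b
    · subst h
      have : 2 ≤ w.count a := List.replicate_sublist_iff.1 hab
      linarith [hw.2 a hadj]
    · rcases hw.1 a b h hadj with ha | hb
      · exact List.count_eq_zero.1 ha (hab.subset (by simp))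
      · exact List.count_eq_zero.1 hb (hab.subset (by simp))
  · refine fun hw => ⟨fun a b hab hadj => ?_, fun a ha => ?_⟩
    · by_contra! h
      exact hw.forall (List.count_pos_iff.1 (Nat.pos_of_ne_zero h.1))
        (List.count_pos_iff.1 (Nat.pos_of_ne_zero h.2)) hab hadj
    · by_contra! h
      exact List.pairwise_iff_forall_sublist.1 hw (List.replicate_sublist_iff.2 h) ha

theorem nil_mem_wSpace : ([] : List V) ∈ WSpace G :=
  mem_wSpace_iff_pairwise.2 List.Pairwise.nil

theorem append_singleton_mem_wSpace_iff {w : List V} {v : V} :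
    w ++ [v] ∈ WSpace G ↔ w ∈ WSpace G ∧ ∀ a ∈ w, ¬ G.Adj a v := by
  simp [mem_wSpace_iff_pairwise, List.pairwise_append]

theorem mem_wSpace_of_sublist {u w : List V} (h : u.Sublist w) (hw : w ∈ WSpace G) :
    u ∈ WSpace G :=
  mem_wSpace_iff_pairwise.2 ((mem_wSpace_iff_pairwise.1 hw).sublist h)

theorem finite_setOf_nonloopCount_eq_zero [Fintype V] :
    {w | w ∈ WSpace G ∧ G.nonloopCount w = 0}.Finite := by
  refine (List.finite_length_le V (Fintype.card V)).subset fun w ⟨hw, h0⟩ => ?_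
  have hloop : ∀ a ∈ w, G.Adj a a := by simpa [nonloopCount, List.countP_eq_zero] using h0
  refine List.Nodup.length_le_card ((mem_wSpace_iff_pairwise.1 hw).imp_of_mem ?_)
  rintro a b ha - hab rfl
  exact hab (hloop a ha)

namespace Policy

variable (pol : Policy G) {w w' : List V} {v : V}

theorem summable_next (hw : w ∈ WSpace G) (v : V) : Summable (pol.next w v) :=
  by_contra fun h => by simpa [tsum_eq_zero_of_not_summable h] using pol.total w hw v

theorem eq_append_of_next_ne_zero (hw : w ∈ WSpace G) (hnm : ∀ a ∈ w, ¬ G.Adj a v)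
    (h : pol.next w v w' ≠ 0) : w' = w ++ [v] := by
  by_contra hne
  have hle := (pol.summable_next hw v).sum_le_tsum {w ++ [v], w'} fun _ _ => pol.nonneg _ _ _
  rw [Finset.sum_pair (Ne.symm hne), pol.noMatch w hw v hnm, pol.total w hw v] at hle
  exact h (le_antisymm (by linarith) (pol.nonneg w v w'))

theorem next_ne_zero_cases (hw : w ∈ WSpace G) (h : pol.next w v w' ≠ 0) :
    ((∀ a ∈ w, ¬ G.Adj a v) ∧ w' = w ++ [v]) ∨
      ∃ k : Fin w.length, G.Adj w[k] v ∧ w' = w.eraseIdx k := by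
  by_cases hm : ∃ a ∈ w, G.Adj a v
  · obtain ⟨k, hk, rfl⟩ := pol.matchRule w hw v hm w' h
    exact .inr ⟨k, by simpa using hk, rfl⟩
  · push Not at hm
    exact .inl ⟨hm, pol.eq_append_of_next_ne_zero hw hm h⟩

theorem mem_wSpace_of_next_ne_zero (hw : w ∈ WSpace G) (h : pol.next w v w' ≠ 0) :
    w' ∈ WSpace G := by
  rcases pol.next_ne_zero_cases hw h with ⟨hm, rfl⟩ | ⟨k, -, rfl⟩
  · exact append_singleton_mem_wSpace_iff.2 ⟨hw, hm⟩
  · exact mem_wSpace_of_sublist (List.eraseIdx_sublist w k) hw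

theorem exists_next_pos (hw : w ∈ WSpace G) (v : V) : ∃ w', 0 < pol.next w v w' := by
  by_contra! h
  have := pol.total w hw v
  simp [fun w' => le_antisymm (h w') (pol.nonneg w v w')] at this

end Policy

theorem nonloopCount_le_of_next_ne_zero (pol : Policy G) {w w' : List V}
    {v : V} (hw : w ∈ WSpace G) (h : pol.next w v w' ≠ 0) :
    G.nonloopCount w' ≤ G.nonloopCount w + 1 := by
  rcases pol.next_ne_zero_cases hw h with ⟨-, rfl⟩ | ⟨k, -, rfl⟩
  · rw [nonloopCount_append_singleton]; split_ifs <;> omega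
  · have := nonloopCount_eraseIdx_add (G := G) w k; omega

section Kernel

variable [Fintype V] {pol : Policy G} {μ : V → ℝ} {w w' : List V}

theorem kernel_nonneg (hμ : ∀ v, 0 ≤ μ v) (w w' : List V) : 0 ≤ kernel G pol μ w w' :=
  Finset.sum_nonneg fun v _ => mul_nonneg (hμ v) (pol.nonneg w v w')

theorem exists_next_ne_zero_of_kernel_ne_zero (h : kernel G pol μ w w' ≠ 0) :
    ∃ v, pol.next w v w' ≠ 0 := by
  obtain ⟨v, -, hv⟩ := Finset.exists_ne_zero_of_sum_ne_zero h
  exact ⟨v, right_ne_zero_of_mul hv⟩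

theorem kernel_pos_of_next_pos (hμ : ∀ v, 0 < μ v) {v : V} (h : 0 < pol.next w v w') :
    0 < kernel G pol μ w w' :=
  Finset.sum_pos' (fun u _ => mul_nonneg (hμ u).le (pol.nonneg w u w'))
    ⟨v, Finset.mem_univ v, mul_pos (hμ v) h⟩

theorem support_kernel_finite (hw : w ∈ WSpace G) :
    (Function.support (kernel G pol μ w)).Finite := by
  refine ((Set.finite_range fun v : V => w ++ [v]).union
    (Set.finite_range fun k : Fin w.length => w.eraseIdx k)).subset fun w' hw' => ?_
  obtain ⟨v, hv⟩ := exists_next_ne_zero_of_kernel_ne_zero hw'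
  rcases pol.next_ne_zero_cases hw hv with ⟨-, rfl⟩ | ⟨k, -, rfl⟩
  · exact .inl ⟨v, rfl⟩
  · exact .inr ⟨k, rfl⟩

theorem summable_kernel_mul (hw : w ∈ WSpace G) (g : List V → ℝ) :
    Summable fun w' => kernel G pol μ w w' * g w' :=
  summable_of_ne_finset_zero (s := (support_kernel_finite (pol := pol) (μ := μ) hw).toFinset)
    fun w' h => by simp_all

theorem tsum_kernel_mul_eq (hw : w ∈ WSpace G) (g : List V → ℝ) (c : V → ℝ)
    (hc : ∀ v w', pol.next w v w' ≠ 0 → g w' = c v) :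
    ∑' w', kernel G pol μ w w' * g w' = ∑ v, μ v * c v := by
  have hpt : ∀ w', kernel G pol μ w w' * g w' = ∑ v, μ v * c v * pol.next w v w' := fun w' => by
    rw [kernel, Finset.sum_mul]
    refine Finset.sum_congr rfl fun v _ => ?_
    by_cases h : pol.next w v w' = 0
    · simp [h]
    · rw [hc v w' h]; ring
  simp_rw [hpt]
  rw [Summable.tsum_finsetSum fun v _ => (pol.summable_next hw v).mul_left _]
  simp_rw [tsum_mul_left, pol.total w hw, mul_one]

theorem tsum_kernel_mul_le (hμ : ∀ v, 0 ≤ μ v) (hμ1 : ∑ v, μ v = 1) (hw : w ∈ WSpace G)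
    {g : List V → ℝ} {c : ℝ} (hc : ∀ v w', pol.next w v w' ≠ 0 → g w' ≤ c) :
    ∑' w', kernel G pol μ w w' * g w' ≤ c := by
  calc ∑' w', kernel G pol μ w w' * g w' ≤ ∑' w', kernel G pol μ w w' * c := by
        refine (summable_kernel_mul hw g).tsum_le_tsum (fun w' => ?_)
          (summable_kernel_mul hw fun _ => c)
        by_cases h : kernel G pol μ w w' = 0
        · simp [h]
        · obtain ⟨v, hv⟩ := exists_next_ne_zero_of_kernel_ne_zero h
          exact mul_le_mul_of_nonneg_left (hc v w' hv) (kernel_nonneg hμ w w')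
    _ = c := by rw [tsum_kernel_mul_eq hw (fun _ => c) (fun _ => c) fun _ _ _ => rfl,
        ← Finset.sum_mul, hμ1, one_mul]

theorem isMarkovOn_kernel (hμ : ∀ v, 0 ≤ μ v) (hμ1 : ∑ v, μ v = 1) :
    IsMarkovOn (WSpace G) (kernel G pol μ) where
  nonneg := kernel_nonneg hμ
  hasSum w hw := by
    have h := tsum_kernel_mul_eq (pol := pol) (μ := μ) hw 1 1 fun _ _ _ => rfl
    simp only [Pi.one_apply, mul_one, hμ1] at h
    exact h ▸ (by simpa using summable_kernel_mul (pol := pol) (μ := μ) hw 1 : Summable _).hasSum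
  mapsTo w hw w' h := by
    obtain ⟨v, hv⟩ := exists_next_ne_zero_of_kernel_ne_zero h
    exact pol.mem_wSpace_of_next_ne_zero hw hv

theorem reflTransGen_kernel_nil (hμ : ∀ v, 0 < μ v) (hw : w ∈ WSpace G) :
    Relation.ReflTransGen (fun a b => 0 < kernel G pol μ a b) [] w := by
  induction w using List.reverseRecOn with
  | nil => exact .refl
  | append_singleton w v ih =>
    obtain ⟨hw, hm⟩ := append_singleton_mem_wSpace_iff.1 hw
    exact (ih hw).tail (kernel_pos_of_next_pos hμ (by rw [pol.noMatch w hw v hm]; exact one_pos))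

end Kernel

end States

theorem sum_tsum_indicator_partLevel_le {ι : Type*} {S : Set (List V)} {ν : List V → ℝ}
    (hν : IsMassOn S ν) (f : V → ι) (k : ι) (T : ℕ) :
    ∑ m ∈ range T, ∑' w, (G.partLevel f k m).indicator ν w ≤ ∑' w, ν w := by
  have hdisj : ((range T : Finset ℕ) : Set ℕ).PairwiseDisjoint (G.partLevel f k) :=
    fun m _ m' _ hne => Set.disjoint_left.2 fun w h h' => hne (h.2.symm.trans h'.2)
  rw [← Summable.tsum_finsetSum fun m _ => hν.summable.indicator _]
  simp_rw [← Finset.indicator_biUnion_apply _ _ hdisj]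
  exact (hν.summable.indicator _).tsum_le_tsum (Set.indicator_le_self' fun w _ => hν.nonneg w)
    hν.summable

section Multipartite

variable {ι : Type*} {f : V → ι} (hf : ∀ u v, G.check.Adj u v ↔ f u ≠ f v)
include hf

theorem adj_of_ne {u v : V} (h : f u ≠ f v) : G.Adj u v := ((hf u v).2 h).1

theorem eq_of_adj_of_eq {u v : V} (h : G.Adj u v) (huv : f u = f v) : u = v :=
  by_contra fun h' => (hf u v).1 ⟨h, h'⟩ huv

theorem isIndep_iff {I : Set V} :
    G.IsIndep I ↔ I.Nonempty ∧ ∃ k, ∀ i ∈ I, f i = k ∧ ¬ G.Adj i i := by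
  refine ⟨fun ⟨⟨i₀, hi₀⟩, hI⟩ => ⟨⟨i₀, hi₀⟩, f i₀, fun i hi => ⟨?_, hI i hi i hi⟩⟩,
    fun ⟨hne, k, hk⟩ => ⟨hne, fun i hi j hj hij => ?_⟩⟩
  · exact by_contra fun h => hI i hi i₀ hi₀ (adj_of_ne hf h)
  · obtain rfl := eq_of_adj_of_eq hf hij ((hk i hi).1.trans (hk j hj).1.symm)
    exact (hk i hi).2 hij

theorem nbhd_eq_of_forall {I : Set V} (hI : I.Nonempty) {k : ι}
    (hk : ∀ i ∈ I, f i = k ∧ ¬ G.Adj i i) : G.nbhd I = {v | f v ≠ k} := by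
  obtain ⟨i₀, hi₀⟩ := hI
  ext v
  refine ⟨fun ⟨u, hu, huv⟩ hv => (hk u hu).2 ?_, fun hv => ⟨i₀, hi₀, adj_of_ne hf ?_⟩⟩
  · rwa [eq_of_adj_of_eq hf huv ((hk u hu).1.trans hv.symm)] at *
  · rw [(hk i₀ hi₀).1]; exact Ne.symm hv

theorem ncond_iff [Fintype V] {μ : V → ℝ} (hsep : ∀ k, ∃ v, f v ≠ k) :
    Ncond G μ ↔ FullSupport μ ∧
      ∀ k, mass μ {v | f v = k ∧ ¬ G.Adj v v} < mass μ {v | f v ≠ k} := by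
  refine ⟨fun ⟨hμ, hI⟩ => ⟨hμ, fun k => ?_⟩, fun ⟨hμ, hlt⟩ => ⟨hμ, fun I hI => ?_⟩⟩
  · by_cases hne : {v | f v = k ∧ ¬ G.Adj v v}.Nonempty
    · have hk : ∀ i ∈ {v | f v = k ∧ ¬ G.Adj v v}, f i = k ∧ ¬ G.Adj i i := fun _ => id
      simpa [nbhd_eq_of_forall hf hne hk] using hI _ ((isIndep_iff hf).2 ⟨hne, k, hk⟩)
    · rw [Set.not_nonempty_iff_eq_empty.1 hne, mass, Set.indicator_empty]
      simpa using mass_pos hμ.1 (S := {v | f v ≠ k}) (hsep k)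
  · obtain ⟨hne, k, hk⟩ := (isIndep_iff hf).1 hI
    rw [nbhd_eq_of_forall hf hne hk]
    exact (mass_mono (fun v => (hμ.1 v).le) hk).trans_lt (hlt k)

section Dynamics

variable [DecidableEq V] {pol : Policy G} {w w' : List V} {v : V} {k : ι}

theorem next_of_same_part (hw : w ∈ WSpace G) (hwk : ∀ a ∈ w, f a = k) (hv : f v = k)
    (h : pol.next w v w' ≠ 0) : (∀ a ∈ w', f a = k) ∧
      G.nonloopCount w' = G.nonloopCount w + if G.Adj v v then 0 else 1 := by
  rcases pol.next_ne_zero_cases hw h with ⟨-, rfl⟩ | ⟨i, hadj, rfl⟩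
  · refine ⟨fun a ha => ?_, nonloopCount_append_singleton w v⟩
    rcases List.mem_append.1 ha with ha | ha
    · exact hwk a ha
    · rwa [List.mem_singleton.1 ha]
  · have hiv : w[i] = v := eq_of_adj_of_eq hf hadj ((hwk _ (List.getElem_mem _)).trans hv.symm)
    refine ⟨fun a ha => hwk a ((List.eraseIdx_sublist w i).subset ha), ?_⟩
    have := nonloopCount_eraseIdx_add (G := G) w i
    rw [hiv] at this hadj
    simp_all

/-- This is where `V₂`-favorability enters: an arrival from another part removes a non-looped
item whenever there is one. -/
theorem next_of_other_part (hfav : V2Favorable G pol) (hw : w ∈ WSpace G) (hne : w ≠ [])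
    (hwk : ∀ a ∈ w, f a = k) (hv : f v ≠ k) (h : pol.next w v w' ≠ 0) :
    (∀ a ∈ w', f a = k) ∧ G.nonloopCount w' = G.nonloopCount w - 1 := by
  have hadj : ∀ a ∈ w, G.Adj a v := fun a ha => adj_of_ne hf (by rw [hwk a ha]; exact Ne.symm hv)
  obtain ⟨i, rfl, hi⟩ : ∃ i : Fin w.length,
      w' = w.eraseIdx i ∧ ((∃ a ∈ w, ¬ G.Adj a a) → ¬ G.Adj w[i] w[i]) := by
    by_cases hnl : ∃ a ∈ w, ¬ G.Adj a a
    · obtain ⟨a, ha, hna⟩ := hnl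
      obtain ⟨i, -, hi, rfl⟩ := hfav w hw v ⟨a, ha, hadj a ha, hna⟩ w' h
      exact ⟨i, rfl, fun _ => by simpa using hi⟩
    · obtain ⟨a, ha⟩ := List.exists_mem_of_ne_nil w hne
      obtain ⟨i, -, rfl⟩ := pol.matchRule w hw v ⟨a, ha, hadj a ha⟩ w' h
      exact ⟨i, rfl, fun h' => absurd h' hnl⟩
  refine ⟨fun a ha => hwk a ((List.eraseIdx_sublist w i).subset ha), ?_⟩
  have hsum := nonloopCount_eraseIdx_add (G := G) w i
  by_cases hnl : ∃ a ∈ w, ¬ G.Adj a a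
  · rw [if_neg (hi hnl)] at hsum; omega
  · have h0 : G.nonloopCount w = 0 := by
      simpa [nonloopCount, List.countP_eq_zero] using hnl
    omega

theorem forall_mem_next_eq (hfav : V2Favorable G pol) (hw : w ∈ WSpace G) (hne : w ≠ [])
    (hwk : ∀ a ∈ w, f a = k) (h : pol.next w v w' ≠ 0) : ∀ a ∈ w', f a = k := by
  by_cases hv : f v = k
  · exact (next_of_same_part hf hw hwk hv h).1
  · exact (next_of_other_part hf hfav hw hne hwk hv h).1

theorem eq_of_mem_wSpace (hw : w ∈ WSpace G) {a b : V} (ha : a ∈ w) (hb : b ∈ w) :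
    f a = f b := by
  by_contra h
  exact (mem_wSpace_iff_pairwise.1 hw).forall ha hb (fun hab => h (hab ▸ rfl)) (adj_of_ne hf h)

variable [Fintype V] {μ : V → ℝ}

theorem reflTransGen_kernel_to_nil (hμ : ∀ v, 0 < μ v) (hsep : ∀ k, ∃ v, f v ≠ k)
    (hw : w ∈ WSpace G) : Relation.ReflTransGen (fun a b => 0 < kernel G pol μ a b) w [] := by
  suffices ∀ n (w : List V), w ∈ WSpace G → w.length ≤ n →
      Relation.ReflTransGen (fun a b => 0 < kernel G pol μ a b) w [] from this _ w hw le_rfl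
  intro n
  induction n with
  | zero => intro w _ hn; rw [List.length_eq_zero_iff.1 (Nat.le_zero.1 hn)]
  | succ n ih =>
    intro w hw hn
    rcases eq_or_ne w [] with rfl | hne
    · exact .refl
    obtain ⟨a, ha⟩ := List.exists_mem_of_ne_nil w hne
    obtain ⟨u, hu⟩ := hsep (f a)
    obtain ⟨w', hw'⟩ := pol.exists_next_pos hw u
    obtain ⟨i, -, rfl⟩ := pol.matchRule w hw u ⟨a, ha, adj_of_ne hf (Ne.symm hu)⟩ w' hw'.ne'
    refine .head (kernel_pos_of_next_pos hμ hw') (ih _ (mem_wSpace_of_sublist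
      (List.eraseIdx_sublist w i) hw) ?_)
    rw [List.length_eraseIdx_of_lt i.2]; omega

theorem irreducible_kernel (hμ : ∀ v, 0 < μ v) (hsep : ∀ k, ∃ v, f v ≠ k) :
    Irreducible G (kernel G pol μ) := fun _ hw _ hw' =>
  (reflTransGen_kernel_to_nil hf hμ hsep hw).trans (reflTransGen_kernel_nil hμ hw')

theorem tsum_kernel_mul_nonloopCount (hfav : V2Favorable G pol) (hw : w ∈ WSpace G)
    (hne : w ≠ []) (hwk : ∀ a ∈ w, f a = k) :
    ∑' w', kernel G pol μ w w' * (G.nonloopCount w' : ℝ) =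
      mass μ {v | f v = k ∧ ¬ G.Adj v v} * (G.nonloopCount w + 1) +
        mass μ {v | f v = k ∧ G.Adj v v} * G.nonloopCount w +
          mass μ {v | f v ≠ k} * ((G.nonloopCount w - 1 : ℕ) : ℝ) := by
  rw [← sum_mul_ite_eq_mass]
  refine tsum_kernel_mul_eq hw _ _ fun v w' h => ?_
  by_cases hv : f v = k
  · rw [(next_of_same_part hf hw hwk hv h).2, if_pos hv]
    split_ifs <;> simp
  · rw [(next_of_other_part hf hfav hw hne hwk hv h).2, if_neg hv]

theorem tsum_kernel_mul_nonloopCount_add_le (hfav : V2Favorable G pol) (hμ : FullSupport μ)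
    (hw : w ∈ WSpace G) {ε : ℝ}
    (hε : ∀ k, ε ≤ mass μ {v | f v ≠ k} - mass μ {v | f v = k ∧ ¬ G.Adj v v}) :
    ∑' w', kernel G pol μ w w' * (G.nonloopCount w' : ℝ) + ε ≤
      G.nonloopCount w + if G.nonloopCount w = 0 then 1 + ε else 0 := by
  by_cases h0 : G.nonloopCount w = 0
  · have := tsum_kernel_mul_le (pol := pol) (fun v => (hμ.1 v).le) hμ.2 hw (c := 1)
      (g := fun w' => (G.nonloopCount w' : ℝ)) fun v w' h => by
        have := nonloopCount_le_of_next_ne_zero pol hw h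
        rw [h0] at this
        exact_mod_cast this
    rw [if_pos h0, h0]
    push_cast
    linarith
  · have hne : w ≠ [] := by rintro rfl; exact h0 rfl
    obtain ⟨a, ha⟩ := List.exists_mem_of_ne_nil w hne
    rw [if_neg h0, tsum_kernel_mul_nonloopCount hf hfav hw hne
      fun b hb => eq_of_mem_wSpace hf hw hb ha,
      Nat.cast_sub (Nat.one_le_iff_ne_zero.2 h0)]
    linear_combination (G.nonloopCount w : ℝ) * mass_add_mass_add_mass hμ.2 f (f a) + hε (f a)

theorem tsum_kernel_mul_indicator_partAbove_of_forall (hfav : V2Favorable G pol)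
    (hμ1 : ∑ v, μ v = 1) (hw : w ∈ WSpace G) (hwk : ∀ a ∈ w, f a = k) (m : ℕ) :
    ∑' w', kernel G pol μ w w' * (G.partAbove f k (m + 1)).indicator 1 w' =
      (if m + 1 ≤ G.nonloopCount w then 1 else 0) +
        mass μ {v | f v = k ∧ ¬ G.Adj v v} * (if G.nonloopCount w = m then 1 else 0) -
          mass μ {v | f v ≠ k} * (if G.nonloopCount w = m + 1 then 1 else 0) := by
  set n := G.nonloopCount w
  have hval : ∀ w', (∀ a ∈ w', f a = k) →
      (G.partAbove f k (m + 1)).indicator (1 : List V → ℝ) w' =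
        if m + 1 ≤ G.nonloopCount w' then 1 else 0 :=
    fun w' hw' => by simp [Set.indicator_apply, partAbove, and_iff_right hw']
  rw [tsum_kernel_mul_eq hw _ (fun v => if f v = k then
      (if G.Adj v v then (if m + 1 ≤ n then 1 else 0) else (if m + 1 ≤ n + 1 then 1 else 0))
      else (if m + 1 ≤ n - 1 then 1 else 0)) ?_, sum_mul_ite_eq_mass]
  · have htot := mass_add_mass_add_mass (G := G) hμ1 f k
    split_ifs <;> first | omega | linarith
  intro v w' h
  by_cases hv : f v = k
  · obtain ⟨hw'k, hN⟩ := next_of_same_part hf hw hwk hv h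
    rw [hval w' hw'k, hN, if_pos hv]
    split_ifs <;> simp_all [n]
  · rw [if_neg hv]
    rcases eq_or_ne w [] with rfl | hne
    · rw [pol.eq_append_of_next_ne_zero hw (by simp) h]
      simp [partAbove, hv, n, nonloopCount]
    · obtain ⟨hw'k, hN⟩ := next_of_other_part hf hfav hw hne hwk hv h
      rw [hval w' hw'k, hN]

theorem tsum_kernel_mul_indicator_partAbove_of_mem_of_ne (hfav : V2Favorable G pol)
    (hw : w ∈ WSpace G) {a : V} (ha : a ∈ w) (hak : f a ≠ k) (n : ℕ) :
    ∑' w', kernel G pol μ w w' * (G.partAbove f k (n + 1)).indicator 1 w' = 0 := by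
  rw [tsum_kernel_mul_eq hw _ 0 fun v w' h => ?_]
  · simp
  have hw' := forall_mem_next_eq hf hfav hw (List.ne_nil_of_mem ha)
    (fun b hb => eq_of_mem_wSpace hf hw hb ha) h
  refine Set.indicator_of_notMem ?_ _
  rintro ⟨hw'k, hn⟩
  obtain ⟨b, hb, -⟩ := List.countP_pos_iff.1 (show 0 < G.nonloopCount w' by omega)
  exact hak ((hw' b hb).symm.trans (hw'k b hb))

/-- Flux balance across the cut between the levels `m` and `m + 1` of the part `k`. -/
theorem mul_tsum_indicator_partLevel_eq (hfav : V2Favorable G pol) (hμ : FullSupport μ)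
    {π : List V → ℝ} (hπ : IsStationary G (kernel G pol μ) π) (m : ℕ) :
    mass μ {v | f v = k ∧ ¬ G.Adj v v} * ∑' w, (G.partLevel f k m).indicator π w =
      mass μ {v | f v ≠ k} * ∑' w, (G.partLevel f k (m + 1)).indicator π w := by
  set A := mass μ {v | f v = k ∧ ¬ G.Adj v v}
  set B := mass μ {v | f v ≠ k}
  have hsumm : ∀ T : Set (List V), Summable (T.indicator π) := fun T =>
    (IsStationaryOn.isMassOn hπ).summable.indicator T
  have hpt : ∀ w, π w * ∑' w', kernel G pol μ w w' * (G.partAbove f k (m + 1)).indicator 1 w' =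
      (G.partAbove f k (m + 1)).indicator π w + A * (G.partLevel f k m).indicator π w -
        B * (G.partLevel f k (m + 1)).indicator π w := fun w => by
    by_cases hw : w ∈ WSpace G
    · by_cases hwk : ∀ a ∈ w, f a = k
      · rw [tsum_kernel_mul_indicator_partAbove_of_forall hf hfav hμ.2 hw hwk]
        simp only [Set.indicator_apply, partAbove, partLevel, Set.mem_ofPred_eq,
          and_iff_right hwk]
        split_ifs <;> ring
      · push Not at hwk
        obtain ⟨a, ha, hak⟩ := hwk
        rw [tsum_kernel_mul_indicator_partAbove_of_mem_of_ne hf hfav hw ha hak]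
        have hnk : ¬ ∀ b ∈ w, f b = k := fun h => hak (h a ha)
        simp [partAbove, partLevel, hnk]
    · simp [Set.indicator_apply, hπ.2.1 w hw]
  have hP := isMarkovOn_kernel (pol := pol) (fun v => (hμ.1 v).le) hμ.2
  have h := hP.tsum_mul_tsum_eq_of_isStationaryOn hπ (g := (G.partAbove f k (m + 1)).indicator 1)
    (Set.indicator_nonneg fun _ _ => zero_le_one) (Set.indicator_le_self' fun _ _ => zero_le_one)
  simp_rw [hpt, mul_comm (π _), ← Set.indicator_mul_left, Pi.one_apply, one_mul] at h
  rw [Summable.tsum_sub ((hsumm _).add ((hsumm _).mul_left A)) ((hsumm _).mul_left B),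
    Summable.tsum_add (hsumm _) ((hsumm _).mul_left A), tsum_mul_left, tsum_mul_left] at h
  linarith

/-- If `μ(V ∖ part k) ≤ μ(V₂ ∩ part k)`, the flux balance makes the `π`-masses of the levels of
the part `k` nondecreasing from `π [] > 0` on (the empty queue lies in every part); as the levels
are disjoint, this contradicts `∑' w, π w = 1`. -/
theorem mass_lt_mass_of_isStationary (hfav : V2Favorable G pol) (hμ : FullSupport μ)
    (hsep : ∃ v, f v ≠ k) {π : List V → ℝ} (hπ : IsStationary G (kernel G pol μ) π)
    (hπnil : 0 < π []) : mass μ {v | f v = k ∧ ¬ G.Adj v v} < mass μ {v | f v ≠ k} := by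
  have hπm : IsMassOn (WSpace G) π := IsStationaryOn.isMassOn hπ
  set q : ℕ → ℝ := fun m => ∑' w, (G.partLevel f k m).indicator π w
  have hB : 0 < mass μ {v | f v ≠ k} := mass_pos hμ.1 hsep
  by_contra! hle
  have hq : ∀ m, π [] ≤ q m := by
    intro m
    induction m with
    | zero =>
      have hnil : ([] : List V) ∈ G.partLevel f k 0 := ⟨by simp, by simp [nonloopCount]⟩
      simpa [q, Set.indicator_of_mem hnil] using
        (hπm.summable.indicator (G.partLevel f k 0)).le_tsum []
        fun w _ => Set.indicator_nonneg (fun w _ => hπm.nonneg w) w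
    | succ m ih =>
      refine le_of_mul_le_mul_left ?_ hB
      calc _ ≤ mass μ {v | f v ≠ k} * q m := mul_le_mul_of_nonneg_left ih hB.le
        _ ≤ mass μ {v | f v = k ∧ ¬ G.Adj v v} * q m :=
          mul_le_mul_of_nonneg_right hle (hπnil.le.trans ih)
        _ = _ := mul_tsum_indicator_partLevel_eq hf hfav hμ hπ m
  obtain ⟨T, hT⟩ := exists_nat_gt (1 / π [])
  have := (Finset.sum_le_sum (s := range T) fun m _ => hq m).trans
    (sum_tsum_indicator_partLevel_le hπm f k T)
  rw [hπ.2.2.1, sum_const, card_range, nsmul_eq_mul] at this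
  linarith [(div_lt_iff₀ hπnil).1 hT]

theorem exists_isStationary_kernel [Finite ι] [Nonempty ι] (hfav : V2Favorable G pol)
    (hμ : FullSupport μ)
    (hlt : ∀ k, mass μ {v | f v = k ∧ ¬ G.Adj v v} < mass μ {v | f v ≠ k}) :
    ∃ π, IsStationary G (kernel G pol μ) π := by
  obtain ⟨k₀, hk₀⟩ := Finite.exists_min fun k =>
    mass μ {v | f v ≠ k} - mass μ {v | f v = k ∧ ¬ G.Adj v v}
  set ε := mass μ {v | f v ≠ k₀} - mass μ {v | f v = k₀ ∧ ¬ G.Adj v v}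
  have hε : 0 < ε := sub_pos.2 (hlt k₀)
  exact (isMarkovOn_kernel (fun v => (hμ.1 v).le) hμ.2).exists_isStationaryOn_of_drift
    (fun w hw => support_kernel_finite hw) nil_mem_wSpace (fun w => Nat.cast_nonneg _)
    (F := (finite_setOf_nonloopCount_eq_zero (G := G)).toFinset) hε (b := 1 + ε) (by linarith)
    fun w hw => by simpa [hw] using tsum_kernel_mul_nonloopCount_add_le hf hfav hμ hw hk₀

end Dynamics

end Multipartite

end Multigraph

theorem v2favorable_maximal_general {V : Type*} [Fintype V] [DecidableEq V] (G : Multigraph V)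
    (p : ℕ) (hp : 2 ≤ p) (hpart : CompletePPartite G p)
    (pol : Policy G) (hfav : V2Favorable G pol) :
    ∀ μ : V → ℝ,
      (FullSupport μ ∧ PositiveRecurrent G (kernel G pol μ)) ↔ Ncond G μ := by
  obtain ⟨f, hsurj, hf⟩ := hpart
  have : Nontrivial (Fin p) := Fin.nontrivial_iff_two_le.2 hp
  have hsep : ∀ k, ∃ v, f v ≠ k := fun k => by
    obtain ⟨k', hk'⟩ := exists_ne k
    obtain ⟨v, rfl⟩ := hsurj k'
    exact ⟨v, hk'⟩
  intro μ
  rw [ncond_iff hf hsep]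
  refine ⟨fun ⟨hμ, hirr, π, hπ⟩ => ⟨hμ, fun k => ?_⟩, fun ⟨hμ, hlt⟩ =>
    ⟨hμ, irreducible_kernel hf hμ.1 hsep, exists_isStationary_kernel hf hfav hμ hlt⟩⟩
  exact mass_lt_mass_of_isStationary hf hfav hμ (hsep k) hπ
    ((isMarkovOn_kernel (fun v => (hμ.1 v).le) hμ.2).pos_of_isStationaryOn hπ hirr nil_mem_wSpace)

/-- Let `G` be a complete `p`-partite multigraph with `p ≥ 2`, and
suppose `p ≥ 3` or `V₁ ≠ ∅`. Then every `V₂`-favorable admissible matching policy is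
maximal: `stab(G,Φ) = Ncond(G)`. -/
theorem v2favorable_maximal {V : Type*} [Fintype V] [DecidableEq V] (G : Multigraph V)
    (p : ℕ) (hp : 2 ≤ p) (hpart : CompletePPartite G p)
    (hcase : 3 ≤ p ∨ ∃ v : V, G.Adj v v)
    (pol : Policy G) (hfav : V2Favorable G pol) :
    ∀ μ : V → ℝ,
      (FullSupport μ ∧ PositiveRecurrent G (kernel G pol μ)) ↔ Ncond G μ :=
  v2favorable_maximal_general G p hp hpart pol hfav
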